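/- arXiv:2309.09386 — 10 statements merged into one kernel-verified Lean document; each statement's English description precedes it below -/
import Mathlib

section
/- Let γ > 0 and let Γ be a CPM(γ)-optimal clustering of a graph G = (V,E). If E' ⊆ E is obtained by deleting only edges whose endpoints lie in different clusters of Γ, then Γ is also CPM(γ)-optimal for the graph (V,E'). In other words, CPM(γ) satisfies Inter-edge Consistency. -/
open Finset
open scoped Classical

/-- Edges of `E` lying inside the vertex set `c`. -/
noncomputable def inEdges {V : Type*} [DecidableEq V]
    (E : Finset (Sym2 V)) (c : Finset V) : Finset (Sym2 V) :=
  E.filter (fun e => ∀ v ∈ e, v ∈ c)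

/-- The CPM(γ) score of a clustering `P` of the graph with edge set `E`. -/
noncomputable def cpm {V : Type*} [Fintype V] [DecidableEq V] (γ : ℝ)
    (E : Finset (Sym2 V)) (P : Finpartition (univ : Finset V)) : ℝ :=
  ∑ c ∈ P.parts, (((inEdges E c).card : ℝ) - γ * (c.card.choose 2))

/-- CPM(γ) satisfies Inter-edge Consistency: if `Γ` is CPM(γ)-optimal for
`(V,E)` and `E' ⊆ E` is obtained by deleting only edges whose endpoints lie in different
clusters of `Γ`, then `Γ` is CPM(γ)-optimal for `(V,E')`. -/
theorem stmt_2 {V : Type*} [Fintype V] [DecidableEq V]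
    (γ : ℝ) (hγ : 0 < γ)
    (E E' : Finset (Sym2 V)) (hsub : E' ⊆ E)
    (Γ : Finpartition (univ : Finset V))
    (hopt : ∀ P : Finpartition (univ : Finset V), cpm γ E P ≤ cpm γ E Γ)
    (hdel : ∀ e ∈ E \ E', ∀ c ∈ Γ.parts, ¬ (∀ v ∈ e, v ∈ c)) :
    ∀ P : Finpartition (univ : Finset V), cpm γ E' P ≤ cpm γ E' Γ := by
  intro P
  have hΓ : cpm γ E' Γ = cpm γ E Γ := by
    unfold cpm
    refine Finset.sum_congr rfl fun c hc => ?_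
    congr 2
    unfold inEdges
    congr 1
    apply Finset.ext
    intro e
    simp only [Finset.mem_filter]
    constructor
    · rintro ⟨he, h⟩; exact ⟨hsub he, h⟩
    · rintro ⟨he, h⟩
      refine ⟨?_, h⟩
      by_contra he'
      exact hdel e (Finset.mem_sdiff.mpr ⟨he, he'⟩) c hc h
  have hP : cpm γ E' P ≤ cpm γ E P := by
    unfold cpm
    refine Finset.sum_le_sum fun c _ => ?_
    have : (inEdges E' c).card ≤ (inEdges E c).card := by
      apply Finset.card_le_card
      intro e he
      unfold inEdges at he ⊢
      simp only [Finset.mem_filter] at he ⊢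
      exact ⟨hsub he.1, he.2⟩
    have h2 : ((inEdges E' c).card : ℝ) ≤ (inEdges E c).card := Nat.cast_le.mpr this
    linarith
  calc cpm γ E' P ≤ cpm γ E P := hP
    _ ≤ cpm γ E Γ := hopt P
    _ = cpm γ E' Γ := hΓ.symm
end

section
/- Let γ > 0 and let Γ be a CPM(γ)-optimal clustering of a graph G = (V,E). If E' ⊇ E is obtained by adding a single edge whose endpoints lie in the same cluster of Γ, then Γ is CPM(γ)-optimal for (V,E'). Consequently (by induction and combination with inter-edge consistency), CPM(γ) satisfies Standard Consistency: adding edges within clusters of Γ and removing edges between clusters of Γ preserves optimality of Γ. -/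
open Finset
open scoped Classical

/-! Changing the edge set from `E` to `E'` changes the CPM score of every clustering by the change
in its number of intra-cluster edges. The optimal clustering `Γ` gains every added edge and loses
none of the removed ones, whereas any other clustering `P` gains at most the added edges, so the
lead of `Γ` over `P` cannot shrink. -/

namespace Finset

variable {α : Type*} [DecidableEq α]

theorem card_filter_sdiff_add_card_filter_inter (p : α → Prop) [DecidablePred p]
    (s t : Finset α) : #((s \ t).filter p) + #((s ∩ t).filter p) = #(s.filter p) := by
  rw [← card_union_of_disjoint (disjoint_filter_filter (disjoint_sdiff_inter s t)),
    ← filter_union, sdiff_union_inter]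

theorem card_filter_add_card_filter_le (p q : α → Prop) [DecidablePred p] [DecidablePred q]
    {s t : Finset α} (hgain : ∀ a ∈ t \ s, p a) (hloss : ∀ a ∈ s \ t, ¬ p a) :
    #(t.filter q) + #(s.filter p) ≤ #(s.filter q) + #(t.filter p) := by
  have hq_t := card_filter_sdiff_add_card_filter_inter q t s
  have hq_s := card_filter_sdiff_add_card_filter_inter q s t
  have hp_t := card_filter_sdiff_add_card_filter_inter p t s
  have hp_s := card_filter_sdiff_add_card_filter_inter p s t
  rw [filter_true_of_mem hgain] at hp_t
  rw [filter_false_of_mem hloss, card_empty] at hp_s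
  rw [inter_comm] at hq_t hp_t
  have := card_filter_le (t \ s) q
  omega

end Finset

section CPM

variable {V : Type*} [Fintype V] [DecidableEq V]

noncomputable def intraEdges (E : Finset (Sym2 V)) (P : Finpartition (univ : Finset V)) :
    Finset (Sym2 V) :=
  E.filter (fun e => ∃ c ∈ P.parts, ∀ v ∈ e, v ∈ c)

theorem sum_card_inEdges (E : Finset (Sym2 V)) (P : Finpartition (univ : Finset V)) :
    ∑ c ∈ P.parts, #(inEdges E c) = #(intraEdges E P) := by
  have hbiUnion : intraEdges E P = P.parts.biUnion (inEdges E) := by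
    ext e
    simp only [intraEdges, inEdges, mem_biUnion, mem_filter]
    tauto
  rw [hbiUnion, card_biUnion]
  intro c hc c' hc' hne
  refine disjoint_left.mpr fun e he he' => ?_
  simp only [inEdges, mem_filter] at he he'
  exact disjoint_left.mp (P.disjoint hc hc' hne) (he.2 _ e.out_fst_mem) (he'.2 _ e.out_fst_mem)

theorem cpm_sub_cpm (γ : ℝ) (E E' : Finset (Sym2 V)) (P : Finpartition (univ : Finset V)) :
    cpm γ E' P - cpm γ E P = #(intraEdges E' P) - #(intraEdges E P) := by
  simp only [cpm, sum_sub_distrib, ← sum_card_inEdges, Nat.cast_sum]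
  ring

theorem cpm_le_cpm_of_add_intra_remove_inter (γ : ℝ) {E E' : Finset (Sym2 V)}
    {Γ : Finpartition (univ : Finset V)}
    (hopt : ∀ P : Finpartition (univ : Finset V), cpm γ E P ≤ cpm γ E Γ)
    (hadd : ∀ e ∈ E' \ E, ∃ c ∈ Γ.parts, ∀ v ∈ e, v ∈ c)
    (hrem : ∀ e ∈ E \ E', ∀ c ∈ Γ.parts, ¬ (∀ v ∈ e, v ∈ c))
    (P : Finpartition (univ : Finset V)) : cpm γ E' P ≤ cpm γ E' Γ := by
  have hgain : (#(intraEdges E' P) : ℝ) + #(intraEdges E Γ) ≤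
      #(intraEdges E P) + #(intraEdges E' Γ) := by
    exact_mod_cast card_filter_add_card_filter_le _ _ hadd
      fun e he ⟨c, hc, hin⟩ => hrem e he c hc hin
  linarith [hopt P, cpm_sub_cpm γ E E' P, cpm_sub_cpm γ E E' Γ]

end CPM

theorem stmt_3_general {V : Type*} [Fintype V] [DecidableEq V] (γ : ℝ) :
    (∀ (E : Finset (Sym2 V)) (Γ : Finpartition (univ : Finset V)),
      (∀ P : Finpartition (univ : Finset V), cpm γ E P ≤ cpm γ E Γ) →
      ∀ e : Sym2 V, e ∉ E → (∃ c ∈ Γ.parts, ∀ v ∈ e, v ∈ c) →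
        ∀ P : Finpartition (univ : Finset V),
          cpm γ (insert e E) P ≤ cpm γ (insert e E) Γ) ∧
    (∀ (E E' : Finset (Sym2 V)) (Γ : Finpartition (univ : Finset V)),
      (∀ P : Finpartition (univ : Finset V), cpm γ E P ≤ cpm γ E Γ) →
      (∀ e ∈ E' \ E, ∃ c ∈ Γ.parts, ∀ v ∈ e, v ∈ c) →
      (∀ e ∈ E \ E', ∀ c ∈ Γ.parts, ¬ (∀ v ∈ e, v ∈ c)) →
        ∀ P : Finpartition (univ : Finset V), cpm γ E' P ≤ cpm γ E' Γ) := by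
  refine ⟨fun E Γ hopt e _ hin P => cpm_le_cpm_of_add_intra_remove_inter γ hopt ?_ ?_ P,
    fun E E' Γ hopt hadd hrem P => cpm_le_cpm_of_add_intra_remove_inter γ hopt hadd hrem P⟩
  · intro f hf
    rw [mem_sdiff, mem_insert] at hf
    exact hf.1.resolve_right hf.2 ▸ hin
  · intro f hf
    exact absurd (mem_insert_of_mem (mem_sdiff.mp hf).1) (mem_sdiff.mp hf).2

/-- CPM(γ) satisfies Standard Consistency: if `Γ` is CPM(γ)-optimal for `(V,E)`
and a single edge internal to a cluster of `Γ` is added, `Γ` remains CPM(γ)-optimal; and more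
generally, adding any set of edges internal to clusters of `Γ` and removing any set of edges
between clusters of `Γ` preserves optimality of `Γ`. -/
theorem stmt_3 {V : Type*} [Fintype V] [DecidableEq V] (γ : ℝ) (hγ : 0 < γ) :
    (∀ (E : Finset (Sym2 V)) (Γ : Finpartition (univ : Finset V)),
      (∀ P : Finpartition (univ : Finset V), cpm γ E P ≤ cpm γ E Γ) →
      ∀ e : Sym2 V, e ∉ E → (∃ c ∈ Γ.parts, ∀ v ∈ e, v ∈ c) →
        ∀ P : Finpartition (univ : Finset V),
          cpm γ (insert e E) P ≤ cpm γ (insert e E) Γ) ∧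
    (∀ (E E' : Finset (Sym2 V)) (Γ : Finpartition (univ : Finset V)),
      (∀ P : Finpartition (univ : Finset V), cpm γ E P ≤ cpm γ E Γ) →
      (∀ e ∈ E' \ E, ∃ c ∈ Γ.parts, ∀ v ∈ e, v ∈ c) →
      (∀ e ∈ E \ E', ∀ c ∈ Γ.parts, ¬ (∀ v ∈ e, v ∈ c)) →
        ∀ P : Finpartition (univ : Finset V), cpm γ E' P ≤ cpm γ E' Γ) :=
  stmt_3_general γ
end

section
/- Fix γ > 0. If C is a cluster of size n in a CPM(γ)-optimal clustering of a graph, and E₀ is any edge cut of C splitting it into nonempty parts of sizes n' and n − n', then |E₀| ≥ γ·(n−1). In particular CPM(γ) satisfies Connectivity with f(n) chosen below γ(n−1). -/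
/-!
Replacing the cluster `C = A ∪ B` by the two clusters `A` and `B` changes the CPM score by
`e(A) + e(B) - e(C) + γ|A||B| ≥ γ|A||B| - |E₀|`, because every edge inside `C` lies inside `A`,
inside `B`, or in the cut `E₀`. Optimality makes this change nonpositive, so `γ|A||B| ≤ |E₀|`, and
`|A||B| ≥ |A| + |B| - 1 = n - 1` since both parts are nonempty.
-/

open Finset
open scoped Classical

/-- The edges of `E` crossing between `A` and `B`. -/
noncomputable def cutEdges {V : Type*} [DecidableEq V]
    (E : Finset (Sym2 V)) (A B : Finset V) : Finset (Sym2 V) :=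
  E.filter (fun e => ∃ u ∈ A, ∃ v ∈ B, e = s(u, v))

namespace Finpartition

variable {α : Type*} [DistribLattice α] [OrderBot α] [DecidableEq α] {a b b₁ b₂ c : α}
  (P : Finpartition a)

theorem notMem_erase_of_le (hc : c ∈ P.parts) (hbc : b ≤ c) : b ∉ P.parts.erase c := by
  intro hb
  obtain ⟨hne, hbP⟩ := Finset.mem_erase.1 hb
  exact P.ne_bot hbP ((P.disjoint hbP hc hne).eq_bot_of_le hbc)

theorem pairwiseDisjoint_insert_insert_erase (hc : c ∈ P.parts) (hb : Disjoint b₁ b₂)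
    (hbc : b₁ ⊔ b₂ = c) :
    ((insert b₁ (insert b₂ (P.parts.erase c)) : Finset α) : Set α).PairwiseDisjoint id := by
  have hrest : ∀ {b}, b ≤ c → ∀ d ∈ P.parts.erase c, Disjoint b d := fun hbc d hd =>
    (P.disjoint hc (Finset.mem_of_mem_erase hd) (Finset.ne_of_mem_erase hd).symm).mono_left hbc
  simp only [Finset.coe_insert]
  refine ((P.disjoint.subset (Finset.erase_subset c _)).insert fun d hd _ => ?_).insert
    fun d hd _ => ?_
  · exact hrest (hbc ▸ le_sup_right) d hd
  · obtain rfl | hd := hd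
    · exact hb
    · exact hrest (hbc ▸ le_sup_left) d hd

theorem sup_insert_insert_erase (hc : c ∈ P.parts) (hbc : b₁ ⊔ b₂ = c) :
    (insert b₁ (insert b₂ (P.parts.erase c))).sup id = a := by
  conv_rhs => rw [← P.sup_parts, ← Finset.insert_erase hc, Finset.sup_insert]
  rw [Finset.sup_insert, Finset.sup_insert, ← sup_assoc]
  exact congrArg (· ⊔ _) hbc

def splitPart (hc : c ∈ P.parts) (hb : Disjoint b₁ b₂) (hbc : b₁ ⊔ b₂ = c) : Finpartition a :=
  (ofPairwiseDisjoint _ (P.pairwiseDisjoint_insert_insert_erase hc hb hbc)).copy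
    (P.sup_insert_insert_erase hc hbc)

theorem sum_splitPart_parts {M : Type*} [AddCommGroup M] (hc : c ∈ P.parts) (hb : Disjoint b₁ b₂)
    (hbc : b₁ ⊔ b₂ = c) (f : α → M) (hf : f ⊥ = 0) :
    ∑ p ∈ (P.splitPart hc hb hbc).parts, f p = ∑ p ∈ P.parts, f p - f c + f b₁ + f b₂ := by
  have hb₁₂ : b₁ ≠ b₂ := by
    rintro rfl
    exact P.ne_bot hc (by rw [← hbc, disjoint_self.1 hb, sup_bot_eq])
  rw [splitPart, copy_parts, sum_ofPairwiseDisjoint_eq_sum _ hf,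
    Finset.sum_insert (by
      rw [Finset.mem_insert, not_or]
      exact ⟨hb₁₂, P.notMem_erase_of_le hc (hbc ▸ le_sup_left)⟩),
    Finset.sum_insert (P.notMem_erase_of_le hc (hbc ▸ le_sup_right)), ← Finset.add_sum_erase _ _ hc]
  abel

end Finpartition

section Clustering

variable {V : Type*} [DecidableEq V]

noncomputable def clusterScore (γ : ℝ) (E : Finset (Sym2 V)) (c : Finset V) : ℝ :=
  (#(inEdges E c) : ℝ) - γ * (#c).choose 2

theorem cpm_eq_sum_clusterScore [Fintype V] (γ : ℝ) (E : Finset (Sym2 V))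
    (P : Finpartition (univ : Finset V)) : cpm γ E P = ∑ c ∈ P.parts, clusterScore γ E c :=
  rfl

@[simp]
theorem clusterScore_empty (γ : ℝ) (E : Finset (Sym2 V)) : clusterScore γ E ∅ = 0 := by
  have hnone : inEdges E ∅ = ∅ :=
    Finset.filter_eq_empty_iff.2 fun e _ he => Finset.notMem_empty _ (he _ e.out_fst_mem)
  simp [clusterScore, hnone]

theorem inEdges_union_subset (E : Finset (Sym2 V)) (A B : Finset V) :
    inEdges E (A ∪ B) ⊆ inEdges E A ∪ inEdges E B ∪ cutEdges E A B := by
  intro e he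
  induction e using Sym2.ind with
  | _ u v =>
    simp only [inEdges, cutEdges, Finset.mem_union, Finset.mem_filter, Sym2.mem_iff,
      forall_eq_or_imp, forall_eq] at he ⊢
    obtain ⟨heE, hu | hu, hv | hv⟩ := he
    · exact .inl (.inl ⟨heE, hu, hv⟩)
    · exact .inr ⟨heE, u, hu, v, hv, rfl⟩
    · exact .inr ⟨heE, v, hv, u, hu, Sym2.eq_swap⟩
    · exact .inl (.inr ⟨heE, hu, hv⟩)

theorem card_inEdges_union_le (E : Finset (Sym2 V)) (A B : Finset V) :
    #(inEdges E (A ∪ B)) ≤ #(inEdges E A) + #(inEdges E B) + #(cutEdges E A B) :=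
  (Finset.card_le_card (inEdges_union_subset E A B)).trans <|
    (Finset.card_union_le _ _).trans <| Nat.add_le_add_right (Finset.card_union_le _ _) _

theorem clusterScore_union_le (γ : ℝ) (E : Finset (Sym2 V)) {A B : Finset V}
    (hAB : Disjoint A B) :
    clusterScore γ E (A ∪ B) ≤
      clusterScore γ E A + clusterScore γ E B + #(cutEdges E A B) - γ * (#A * #B) := by
  have hedges : (#(inEdges E (A ∪ B)) : ℝ) ≤
      #(inEdges E A) + #(inEdges E B) + #(cutEdges E A B) := by
    exact_mod_cast card_inEdges_union_le E A B
  simp only [clusterScore, Finset.card_union_of_disjoint hAB, Nat.cast_choose_two, Nat.cast_add]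
  linarith

theorem mul_card_le_card_cutEdges_of_forall_cpm_le [Fintype V] {γ : ℝ} {E : Finset (Sym2 V)}
    {Γ : Finpartition (univ : Finset V)} (hopt : ∀ P, cpm γ E P ≤ cpm γ E Γ) {C A B : Finset V}
    (hC : C ∈ Γ.parts) (hAB : Disjoint A B) (hABC : A ∪ B = C) :
    γ * (#A * #B) ≤ #(cutEdges E A B) := by
  subst hABC
  have hsplit := hopt (Γ.splitPart hC hAB rfl)
  rw [cpm_eq_sum_clusterScore, cpm_eq_sum_clusterScore,
    Finpartition.sum_splitPart_parts _ _ _ _ _ (clusterScore_empty γ E)] at hsplit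
  linarith [clusterScore_union_le γ E hAB]

end Clustering

/-- if `C` is a cluster of size `n` in a CPM(γ)-optimal clustering and `E₀` is
any edge cut of `C` splitting it into nonempty parts `A` and `B`, then `|E₀| ≥ γ(n-1)`.
In particular CPM(γ) satisfies Connectivity. -/
theorem stmt_4 {V : Type*} [Fintype V] [DecidableEq V]
    (γ : ℝ) (hγ : 0 < γ)
    (E : Finset (Sym2 V))
    (Γ : Finpartition (univ : Finset V))
    (hopt : ∀ P : Finpartition (univ : Finset V), cpm γ E P ≤ cpm γ E Γ)
    (C : Finset V) (hC : C ∈ Γ.parts)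
    (A B : Finset V) (hA : A.Nonempty) (hB : B.Nonempty)
    (hdisj : Disjoint A B) (hunion : A ∪ B = C) :
    γ * ((C.card : ℝ) - 1) ≤ ((cutEdges E A B).card : ℝ) := by
  have hA1 : (1 : ℝ) ≤ #A := mod_cast hA.card_pos
  have hB1 : (1 : ℝ) ≤ #B := mod_cast hB.card_pos
  have hcard : (#C : ℝ) = #A + #B := by
    rw [← hunion, Finset.card_union_of_disjoint hdisj, Nat.cast_add]
  calc γ * ((#C : ℝ) - 1) ≤ γ * (#A * #B) := by
        gcongr
        nlinarith [mul_nonneg (sub_nonneg.2 hA1) (sub_nonneg.2 hB1)]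
    _ ≤ #(cutEdges E A B) := mul_card_le_card_cutEdges_of_forall_cpm_le hopt hC hdisj hunion
end

section
/- There is no single function f : ℕ → ℝ with f tending to infinity (non-decreasing, non-negative) such that for all γ ∈ (0,1), every cluster of size n in every CPM(γ)-optimal clustering has minimum edge cut size strictly greater than f(n). In particular, for every n there exists γ ∈ (0,1) and a network with a CPM(γ)-optimal clustering containing a cluster of size ≥ n with a cut edge. -/
open Finset
open scoped Classical

/-!
If `γ · C(n, 2) ≤ 1`, a connected graph on `n` vertices is CPM(γ)-optimally clustered as a single
cluster: any clustering that splits it leaves at least one edge between clusters, losing `1`,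
while saving at most `γ · C(n, 2)` in penalty. For the path on `n + 2` vertices and
`γ = 1 / (C(n + 2, 2) + 1)` this gives an optimal cluster of size `n + 2` that the leaf edge
`s(0, 1)` alone cuts off, so the minimum cut size of optimal clusters stays `1` along
arbitrarily large sizes, below any `f` tending to infinity.
-/

lemma SimpleGraph.Preconnected.exists_adj_mem_not_mem {V : Type*} {G : SimpleGraph V}
    (hG : G.Preconnected) {s : Set V} {u v : V} (hu : u ∈ s) (hv : v ∉ s) :
    ∃ x y, G.Adj x y ∧ x ∈ s ∧ y ∉ s := by
  obtain ⟨p⟩ := hG u v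
  obtain ⟨d, -, hd⟩ := p.exists_boundary_dart s hu hv
  exact ⟨_, _, d.adj, hd⟩

lemma mem_inEdges {V : Type*} [DecidableEq V] {E : Finset (Sym2 V)} {c : Finset V} {e : Sym2 V} :
    e ∈ inEdges E c ↔ e ∈ E ∧ ∀ v ∈ e, v ∈ c := by
  simp [inEdges]

variable {V : Type*} [Fintype V] [DecidableEq V]

lemma cpm_eq_of_univ_mem_parts (γ : ℝ) (E : Finset (Sym2 V))
    {Γ : Finpartition (univ : Finset V)} (hΓ : univ ∈ Γ.parts) :
    cpm γ E Γ = #E - γ * (Fintype.card V).choose 2 := by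
  have hparts : Γ.parts = {univ} :=
    eq_singleton_iff_unique_mem.mpr ⟨hΓ, fun c hc => by
      obtain ⟨v, hv⟩ := Γ.nonempty_of_mem_parts hc
      exact Γ.eq_of_mem_parts hc hΓ hv (mem_univ v)⟩
  have hE : inEdges E univ = E := by
    ext e
    simp [mem_inEdges]
  simp [cpm, hparts, hE, card_univ]

lemma cpm_le_sum_card_inEdges {γ : ℝ} (hγ : 0 ≤ γ) (E : Finset (Sym2 V))
    (P : Finpartition (univ : Finset V)) :
    cpm γ E P ≤ ∑ c ∈ P.parts, (#(inEdges E c) : ℝ) :=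
  sum_le_sum fun c _ => sub_le_self _ (by positivity)

lemma sum_card_inEdges_lt_card {E : Finset (Sym2 V)} (P : Finpartition (univ : Finset V))
    {e : Sym2 V} (he : e ∈ E) (hcross : ∀ c ∈ P.parts, e ∉ inEdges E c) :
    ∑ c ∈ P.parts, #(inEdges E c) < #E := by
  have hdisj : (P.parts : Set (Finset V)).PairwiseDisjoint (inEdges E) := by
    intro c hc c' hc' hne
    refine disjoint_left.mpr fun e' hc₁ hc₂ => hne ?_
    obtain ⟨v, hv⟩ : ∃ v, v ∈ e' := ⟨_, Sym2.out_fst_mem e'⟩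
    exact P.eq_of_mem_parts hc hc' ((mem_inEdges.mp hc₁).2 v hv) ((mem_inEdges.mp hc₂).2 v hv)
  rw [← card_biUnion hdisj]
  refine card_lt_card ⟨fun e' he' => ?_, fun hsub => ?_⟩
  · obtain ⟨c, -, hc⟩ := mem_biUnion.mp he'
    exact (mem_inEdges.mp hc).1
  · obtain ⟨c, hc, hec⟩ := mem_biUnion.mp (hsub he)
    exact hcross c hc hec

theorem SimpleGraph.Connected.cpm_le_of_univ_mem_parts {G : SimpleGraph V} [DecidableRel G.Adj] (hG : G.Connected)
    {γ : ℝ} (hγ : 0 ≤ γ) (hγV : γ * (Fintype.card V).choose 2 ≤ 1)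
    {Γ : Finpartition (univ : Finset V)} (hΓ : univ ∈ Γ.parts)
    (P : Finpartition (univ : Finset V)) : cpm γ G.edgeFinset P ≤ cpm γ G.edgeFinset Γ := by
  rw [cpm_eq_of_univ_mem_parts γ _ hΓ]
  by_cases hP : univ ∈ P.parts
  · rw [cpm_eq_of_univ_mem_parts γ _ hP]
  obtain ⟨v⟩ := hG.nonempty
  have hv : P.part v ∈ P.parts := P.part_mem.mpr (mem_univ v)
  obtain ⟨w, hw⟩ : ∃ w, w ∉ P.part v := by
    by_contra! h
    exact hP (by rwa [eq_univ_iff_forall.mpr h] at hv)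
  obtain ⟨x, y, hxy, hx, hy⟩ :=
    hG.preconnected.exists_adj_mem_not_mem (s := P.part v) (P.mem_part_self.mpr (mem_univ v)) hw
  have hcross : ∀ c ∈ P.parts, s(x, y) ∉ inEdges G.edgeFinset c := fun c hc hxyc => by
    have hxc := (mem_inEdges.mp hxyc).2 x (Sym2.mem_mk_left x y)
    have hyc := (mem_inEdges.mp hxyc).2 y (Sym2.mem_mk_right x y)
    exact hy (P.eq_of_mem_parts hc hv hxc hx ▸ hyc)
  have hlt := sum_card_inEdges_lt_card P (G.mem_edgeFinset.mpr hxy) hcross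
  have hle : ∑ c ∈ P.parts, (#(inEdges G.edgeFinset c) : ℝ) + 1 ≤ #G.edgeFinset := by
    exact_mod_cast Nat.add_one_le_iff.mpr hlt
  linarith [cpm_le_sum_card_inEdges hγ G.edgeFinset P]

lemma cutEdges_edgeFinset_singleton_compl (G : SimpleGraph V) [DecidableRel G.Adj] (v : V) :
    cutEdges G.edgeFinset {v} {v}ᶜ = G.incidenceFinset v := by
  ext e
  simp only [cutEdges, mem_filter, mem_singleton, mem_compl, exists_eq_left,
    SimpleGraph.mem_incidenceFinset, SimpleGraph.incidenceSet, Set.mem_ofPred_eq,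
    SimpleGraph.mem_edgeFinset]
  constructor
  · rintro ⟨he, w, -, rfl⟩
    exact ⟨he, Sym2.mem_mk_left v w⟩
  · rintro ⟨he, hv⟩
    obtain ⟨w, rfl⟩ := Sym2.mem_iff_exists.mp hv
    exact ⟨he, w, (G.ne_of_adj he).symm, rfl⟩

lemma SimpleGraph.pathGraph_degree_zero (n : ℕ) : (SimpleGraph.pathGraph (n + 2)).degree 0 = 1 := by
  rw [← SimpleGraph.card_neighborFinset_eq_degree, card_eq_one]
  refine ⟨1, ?_⟩
  ext w
  rw [SimpleGraph.mem_neighborFinset, SimpleGraph.pathGraph_adj, mem_singleton, Fin.ext_iff]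
  simp only [Fin.val_zero, Fin.val_one]
  omega

theorem exists_cpm_optimal_cluster_with_cut_edge (n : ℕ) : ∃ γ : ℝ, 0 < γ ∧ γ < 1 ∧
    ∃ (m : ℕ) (E : Finset (Sym2 (Fin m))),
      (∀ e ∈ E, ¬ e.IsDiag) ∧
      ∃ Γ : Finpartition (univ : Finset (Fin m)),
        (∀ P : Finpartition (univ : Finset (Fin m)), cpm γ E P ≤ cpm γ E Γ) ∧
        ∃ c ∈ Γ.parts, n ≤ c.card ∧
          ∃ A B : Finset (Fin m), A.Nonempty ∧ B.Nonempty ∧ Disjoint A B ∧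
            A ∪ B = c ∧ (cutEdges E A B).card = 1 := by
  set C : ℝ := Nat.cast ((n + 2).choose 2)
  have hC : 1 ≤ C := Nat.one_le_cast.mpr (Nat.choose_pos (by omega))
  have hγC : 1 / (C + 1) * C ≤ 1 := by
    rw [div_mul_eq_mul_div, one_mul, div_le_one (by linarith)]
    linarith
  let G := SimpleGraph.pathGraph (n + 2)
  let Γ := Finpartition.indiscrete (univ_nonempty (α := Fin (n + 2))).ne_empty
  have hΓ : univ ∈ Γ.parts := by simp [Γ, Finpartition.indiscrete_parts]
  refine ⟨1 / (C + 1), by positivity, (div_lt_one (by linarith)).mpr (by linarith),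
    n + 2, G.edgeFinset, fun e he => G.not_isDiag_of_mem_edgeFinset he, Γ,
    (SimpleGraph.pathGraph_connected (n + 1)).cpm_le_of_univ_mem_parts (by positivity)
      (by simpa using hγC) hΓ, univ, hΓ, by simp, {0}, {0}ᶜ, singleton_nonempty 0,
    ⟨1, by simp⟩, disjoint_compl_right, union_compl _, ?_⟩
  rw [cutEdges_edgeFinset_singleton_compl, SimpleGraph.card_incidenceFinset_eq_degree]
  exact SimpleGraph.pathGraph_degree_zero n

open Filter in
/-- there is no single non-negative non-decreasing function `f` tending to
infinity such that, for every `γ ∈ (0,1)`, every cluster of size `n` in every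
CPM(γ)-optimal clustering of every network has minimum edge cut size strictly greater
than `f n`.  In particular, for every `n` there exist `γ ∈ (0,1)` and a network with a
CPM(γ)-optimal clustering containing a cluster of size `≥ n` with a cut edge (a
bipartition crossed by exactly one edge). -/
theorem stmt_8 :
    (¬ ∃ f : ℕ → ℝ, Monotone f ∧ Tendsto f atTop atTop ∧ (∀ n, 0 ≤ f n) ∧
      ∀ γ : ℝ, 0 < γ → γ < 1 →
        ∀ (m : ℕ) (E : Finset (Sym2 (Fin m))),
          (∀ e ∈ E, ¬ e.IsDiag) →
          ∀ Γ : Finpartition (univ : Finset (Fin m)),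
            (∀ P : Finpartition (univ : Finset (Fin m)), cpm γ E P ≤ cpm γ E Γ) →
            ∀ c ∈ Γ.parts, ∀ A B : Finset (Fin m),
              A.Nonempty → B.Nonempty → Disjoint A B → A ∪ B = c →
              f c.card < ((cutEdges E A B).card : ℝ)) ∧
    (∀ n : ℕ, ∃ γ : ℝ, 0 < γ ∧ γ < 1 ∧
      ∃ (m : ℕ) (E : Finset (Sym2 (Fin m))),
        (∀ e ∈ E, ¬ e.IsDiag) ∧
        ∃ Γ : Finpartition (univ : Finset (Fin m)),
          (∀ P : Finpartition (univ : Finset (Fin m)), cpm γ E P ≤ cpm γ E Γ) ∧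
          ∃ c ∈ Γ.parts, n ≤ c.card ∧
            ∃ A B : Finset (Fin m), A.Nonempty ∧ B.Nonempty ∧ Disjoint A B ∧
              A ∪ B = c ∧ (cutEdges E A B).card = 1) := by
  refine ⟨?_, exists_cpm_optimal_cluster_with_cut_edge⟩
  rintro ⟨f, -, hf_tendsto, -, hf⟩
  obtain ⟨N, hN⟩ := (hf_tendsto.eventually_ge_atTop 1).exists_forall_of_atTop
  obtain ⟨γ, hγ0, hγ1, m, E, hE, Γ, hΓ, c, hc, hNc, A, B, hA, hB, hAB, hABc, hcut⟩ :=
    exists_cpm_optimal_cluster_with_cut_edge N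
  have hlt := hf γ hγ0 hγ1 m E hE Γ hΓ c hc A B hA hB hAB hABc
  rw [hcut, Nat.cast_one] at hlt
  linarith [hN c.card hNc]
end

section
/- The Components-are-Clusters method fails Connectivity: for every non-decreasing non-negative function f tending to infinity, there exists a graph (e.g., one whose component is a tree on n₀ vertices with n₀ ≥ 2 chosen so that f(n₀) ≥ 1) such that the method returns a non-singleton cluster of size n with minimum edge cut size ≤ f(n). -/
open Finset Filter
open scoped Classical

/-! A leaf of a star is separated from the rest of the star by its one edge, and stars of every
size are connected; so once `f n ≥ 1`, the star on `n ≥ 2` vertices is a non-singleton component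
with a cut of size `1 ≤ f n`. -/

namespace SimpleGraph

variable {V : Type*} [Fintype V] (G : SimpleGraph V) [DecidableRel G.Adj]

theorem fromEdgeSet_coe_edgeFinset : fromEdgeSet (G.edgeFinset : Set (Sym2 V)) = G := by
  rw [coe_edgeFinset, fromEdgeSet_edgeSet]

variable [DecidableEq V]

theorem cutEdges_singleton_subset_incidenceFinset (v : V) (B : Finset V) :
    cutEdges G.edgeFinset {v} B ⊆ G.incidenceFinset v := by
  intro e he
  obtain ⟨heG, u, hu, w, -, rfl⟩ := mem_filter.mp he
  rw [mem_singleton] at hu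
  subst hu
  exact (G.mem_incidenceFinset _ _).mpr ⟨mem_edgeFinset.mp heG, Sym2.mem_mk_left _ _⟩

theorem card_cutEdges_singleton_le_degree (v : V) (B : Finset V) :
    #(cutEdges G.edgeFinset {v} B) ≤ G.degree v :=
  G.card_incidenceFinset_eq_degree v ▸
    card_le_card (G.cutEdges_singleton_subset_incidenceFinset v B)

end SimpleGraph

open SimpleGraph in
theorem stmt_11_general (f : ℕ → ℝ)
    (htop : Tendsto f atTop atTop) :
    ∃ (m : ℕ) (E : Finset (Sym2 (Fin m))) (c A B : Finset (Fin m)),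
      (∀ e ∈ E, ¬ e.IsDiag) ∧
      (∀ u ∈ c, ∀ v : Fin m, (SimpleGraph.fromEdgeSet (E : Set (Sym2 (Fin m)))).Adj u v → v ∈ c) ∧
      (∀ u ∈ c, ∀ v ∈ c, (SimpleGraph.fromEdgeSet (E : Set (Sym2 (Fin m)))).Reachable u v) ∧
      2 ≤ c.card ∧
      A.Nonempty ∧ B.Nonempty ∧ Disjoint A B ∧ A ∪ B = c ∧
      ((cutEdges E A B).card : ℝ) ≤ f c.card := by
  obtain ⟨k, hfk⟩ : ∃ k, 1 ≤ f (k + 2) :=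
    (((tendsto_add_atTop_iff_nat 2).mpr htop).eventually_ge_atTop 1).exists
  have hcut := (starGraph (0 : Fin (k + 2))).card_cutEdges_singleton_le_degree 1 (univ \ {1})
  rw [degree_starGraph_of_ne_center (by simp)] at hcut
  refine ⟨k + 2, (starGraph 0).edgeFinset, univ, {1}, univ \ {1},
    fun e he => not_isDiag_of_mem_edgeSet _ (mem_edgeFinset.mp he), fun _ _ v _ => mem_univ v,
    fun u _ v _ => ?_, by simp, singleton_nonempty 1, ⟨0, by simp⟩, disjoint_sdiff,
    union_sdiff_of_subset (subset_univ _), ?_⟩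
  · rw [fromEdgeSet_coe_edgeFinset]
    exact (connected_starGraph 0).preconnected u v
  · rw [card_univ, Fintype.card_fin]
    exact le_trans (by exact_mod_cast hcut) hfk

/-- the Components-are-Clusters method fails Connectivity.  For every
non-negative non-decreasing function `f` tending to infinity, there is a graph with a
connected component `c` (a non-singleton cluster returned by the method) admitting a
bipartition `A, B` whose number of crossing edges is at most `f (|c|)` (e.g. a tree
component on `n₀ ≥ 2` vertices with `f n₀ ≥ 1`, which has a cut edge). -/
theorem stmt_11 (f : ℕ → ℝ) (hmono : Monotone f) (hnonneg : ∀ n, 0 ≤ f n)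
    (htop : Tendsto f atTop atTop) :
    ∃ (m : ℕ) (E : Finset (Sym2 (Fin m))) (c A B : Finset (Fin m)),
      (∀ e ∈ E, ¬ e.IsDiag) ∧
      (∀ u ∈ c, ∀ v : Fin m, (SimpleGraph.fromEdgeSet (E : Set (Sym2 (Fin m)))).Adj u v → v ∈ c) ∧
      (∀ u ∈ c, ∀ v ∈ c, (SimpleGraph.fromEdgeSet (E : Set (Sym2 (Fin m)))).Reachable u v) ∧
      2 ≤ c.card ∧
      A.Nonempty ∧ B.Nonempty ∧ Disjoint A B ∧ A ∪ B = c ∧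
      ((cutEdges E A B).card : ℝ) ≤ f c.card :=
  stmt_11_general f htop
end

section
/- With the setup of the previous statement (two n-cliques A, B joined by an edge a₀b₀ in a network with E ≥ n²−n+1 edges, n ≥ 5), modularity satisfies Q_A > Q_{A₀} + Q_{{a₀,b₀}}: keeping A intact strictly beats splitting off the two-endpoint cluster {a₀,b₀}. This reduces to 4E(n−2) > 2n(n−1)² − 3n², which holds since 4E ≥ 4(n²−n+1) > 2n² − n + 6 + 1/(n−2). -/
/-- with two `n`-cliques `A`, `B` joined by an edge `a₀b₀` in a network with
`E ≥ n² - n + 1` edges and `n ≥ 5`, modularity satisfies `Q_A > Q_{A₀} + Q_{a₀,b₀}`, where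
`Q_{A₀} = C(n-1,2)/E - (n-1)⁴/(4E²)`, `Q_{a₀,b₀} = 1/E - n²/E²` and
`Q_A = (C(n-1,2) + n - 1)/E - ((n-1)² + n)²/(4E²)`.  This reduces to
`4E(n-2) > 2n(n-1)² - 3n²`. -/
theorem stmt_14 (n : ℕ) (hn : 5 ≤ n) (E : ℝ)
    (hE : (n : ℝ) ^ 2 - n + 1 ≤ E) :
    (((n - 1).choose 2 : ℝ) / E - ((n : ℝ) - 1) ^ 4 / (4 * E ^ 2))
        + (1 / E - (n : ℝ) ^ 2 / E ^ 2)
      < (((n - 1).choose 2 : ℝ) + ((n : ℝ) - 1)) / E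
          - (((n : ℝ) - 1) ^ 2 + (n : ℝ)) ^ 2 / (4 * E ^ 2) ∧
    2 * (n : ℝ) * ((n : ℝ) - 1) ^ 2 - 3 * (n : ℝ) ^ 2 < 4 * E * ((n : ℝ) - 2) := by
  have hn' : (5 : ℝ) ≤ (n : ℝ) := by exact_mod_cast hn
  have hE0 : (0 : ℝ) < E := by nlinarith
  have key : 2 * (n : ℝ) * ((n : ℝ) - 1) ^ 2 - 3 * (n : ℝ) ^ 2 < 4 * E * ((n : ℝ) - 2) := by
    nlinarith [sq_nonneg ((n:ℝ) - 5), sq_nonneg (E - (n:ℝ)^2)]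
  refine ⟨?_, key⟩
  rw [← sub_pos]
  have heq : (((n - 1).choose 2 : ℝ) + ((n : ℝ) - 1)) / E
          - (((n : ℝ) - 1) ^ 2 + (n : ℝ)) ^ 2 / (4 * E ^ 2)
      - ((((n - 1).choose 2 : ℝ) / E - ((n : ℝ) - 1) ^ 4 / (4 * E ^ 2))
        + (1 / E - (n : ℝ) ^ 2 / E ^ 2))
      = (4 * E * ((n : ℝ) - 2) - (2 * (n : ℝ) * ((n : ℝ) - 1) ^ 2 - 3 * (n : ℝ) ^ 2))
          / (4 * E ^ 2) := by
    field_simp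
    ring
  rw [heq]
  apply div_pos (by linarith) (by positivity)
end

section
/- With two n-cliques A, B joined by edge a₀b₀ (n > 5) in a network with E ≥ n²−n+1 edges, modularity satisfies Q_A + Q_B > Q_{A∪{b₀}} + Q_{B₀} where B₀ = B∖{b₀}: the symmetric split into the two cliques strictly beats moving b₀ into A's cluster. This reduces to 4E(n−2) > 2n³ + 2n² − 2n − 2, equivalently (after dividing by n−2) 4E > 2n² + 6n + 10 + 18/(n−2), which holds for n > 5 since 4E ≥ 4n² − 4n + 4. -/
/-- with two `n`-cliques `A`, `B` joined by the edge `a₀b₀` (`n > 5`) in a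
network with `E ≥ n² - n + 1` edges, modularity satisfies
`Q_A + Q_B > Q_{A ∪ {b₀}} + Q_{B₀}`, where `Q_A = Q_B = C(n,2)/E - (2C(n,2)+1)²/(4E²)`,
`Q_{A ∪ {b₀}} = (C(n,2)+1)/E - (2C(n,2)+n+1)²/(4E²)` and
`Q_{B₀} = Q_{A₀} = C(n-1,2)/E - (n-1)⁴/(4E²)`.  This reduces to
`4E(n-2) > 2n³ + 2n² - 2n - 2`, which holds for `n > 5` since `4E ≥ 4n² - 4n + 4`. -/
theorem stmt_15 (n : ℕ) (hn : 5 < n) (E : ℝ)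
    (hE : (n : ℝ) ^ 2 - n + 1 ≤ E) :
    ((((n.choose 2 : ℝ) + 1) / E
          - (2 * (n.choose 2 : ℝ) + (n : ℝ) + 1) ^ 2 / (4 * E ^ 2))
        + (((n - 1).choose 2 : ℝ) / E - ((n : ℝ) - 1) ^ 4 / (4 * E ^ 2))
      < ((n.choose 2 : ℝ) / E - (2 * (n.choose 2 : ℝ) + 1) ^ 2 / (4 * E ^ 2))
          + ((n.choose 2 : ℝ) / E - (2 * (n.choose 2 : ℝ) + 1) ^ 2 / (4 * E ^ 2))) ∧
    2 * (n : ℝ) ^ 3 + 2 * (n : ℝ) ^ 2 - 2 * (n : ℝ) - 2 < 4 * E * ((n : ℝ) - 2) := by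
  have hm : (6 : ℝ) ≤ (n : ℝ) := by exact_mod_cast hn
  have hE0 : (0 : ℝ) < E := by nlinarith
  have hc : (n.choose 2 : ℝ) = (n : ℝ) * ((n : ℝ) - 1) / 2 := by
    rw [Nat.cast_choose_two]
  have hc' : ((n - 1).choose 2 : ℝ) = ((n : ℝ) - 1) * ((n : ℝ) - 2) / 2 := by
    rw [Nat.cast_choose_two]
    have h1 : ((n - 1 : ℕ) : ℝ) = (n : ℝ) - 1 := by
      have : 1 ≤ n := by omega
      push_cast [this]; ring
    rw [h1]; ring
  have key : 2 * (n : ℝ) ^ 3 + 2 * (n : ℝ) ^ 2 - 2 * (n : ℝ) - 2 < 4 * E * ((n : ℝ) - 2) := by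
    nlinarith [sq_nonneg ((n:ℝ) - 6), sq_nonneg ((n:ℝ) - 2)]
  refine ⟨?_, key⟩
  rw [hc, hc', ← sub_pos]
  have heq : ((n : ℝ) * ((n : ℝ) - 1) / 2 / E - (2 * ((n : ℝ) * ((n : ℝ) - 1) / 2) + 1) ^ 2 / (4 * E ^ 2))
          + ((n : ℝ) * ((n : ℝ) - 1) / 2 / E - (2 * ((n : ℝ) * ((n : ℝ) - 1) / 2) + 1) ^ 2 / (4 * E ^ 2))
      - ((((n : ℝ) * ((n : ℝ) - 1) / 2) + 1) / E
          - (2 * ((n : ℝ) * ((n : ℝ) - 1) / 2) + (n : ℝ) + 1) ^ 2 / (4 * E ^ 2)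
        + (((n : ℝ) - 1) * ((n : ℝ) - 2) / 2 / E - ((n : ℝ) - 1) ^ 4 / (4 * E ^ 2)))
      = (4 * E * ((n : ℝ) - 2) + 2 * (n : ℝ) ^ 2) / (4 * E ^ 2) := by
    field_simp
    ring
  rw [heq]
  have hnum : 0 < 4 * E * ((n : ℝ) - 2) + 2 * (n : ℝ) ^ 2 := by nlinarith
  positivity
end

section
/- Let N contain a component G₁ of two cliques each with e internal edges joined by a single edge, and let E_other be the number of edges of N outside G₁, so that |E| = E_other + 2e + 1. The modularity difference between clustering G₁ as one cluster (Q₁) versus two clusters A, B (Q₂) satisfies ΔQ = Q₁ − Q₂ = (2|E| − 4e² − 4e − 1)/(2|E|²), so Q₁ > Q₂ if and only if |E| > 2e² + 2e + 1/2, equivalently E_other > 2e² − 1/2. -/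
/-- let `G₁` consist of two cliques, each with `e ≥ 1` internal edges, joined
by a single edge, inside a network with `Etot = Eother + 2e + 1` total edges (`Eother ≥ 0`
edges outside `G₁`).  With `Q_A = e/Etot - ((2e+1)/(2Etot))²`, `Q₂ = 2Q_A` (the two cliques
as separate clusters) and `Q₁ = (2e+1)/Etot - ((4e+2)/(2Etot))²` (`G₁` as one cluster), one
has `ΔQ = Q₁ - Q₂ = (2Etot - 4e² - 4e - 1)/(2Etot²)`, and `Q₁ > Q₂` iff
`Etot > 2e² + 2e + 1/2` iff `Eother > 2e² - 1/2`. -/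
theorem stmt_16 (e : ℕ) (he : 1 ≤ e) (Eother : ℝ) (hother : 0 ≤ Eother)
    (Etot : ℝ) (hEtot : Etot = Eother + 2 * (e : ℝ) + 1)
    (QA Q1 Q2 : ℝ)
    (hQA : QA = (e : ℝ) / Etot - ((2 * (e : ℝ) + 1) / (2 * Etot)) ^ 2)
    (hQ2 : Q2 = 2 * QA)
    (hQ1 : Q1 = (2 * (e : ℝ) + 1) / Etot - ((4 * (e : ℝ) + 2) / (2 * Etot)) ^ 2) :
    Q1 - Q2 = (2 * Etot - 4 * (e : ℝ) ^ 2 - 4 * (e : ℝ) - 1) / (2 * Etot ^ 2) ∧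
    (Q2 < Q1 ↔ 2 * (e : ℝ) ^ 2 + 2 * (e : ℝ) + 1 / 2 < Etot) ∧
    (Q2 < Q1 ↔ 2 * (e : ℝ) ^ 2 - 1 / 2 < Eother) := by
  have he' : (1:ℝ) ≤ (e:ℝ) := by exact_mod_cast he
  have hpos : 0 < Etot := by nlinarith
  have hne : Etot ≠ 0 := ne_of_gt hpos
  have hdiff : Q1 - Q2 = (2 * Etot - 4 * (e : ℝ) ^ 2 - 4 * (e : ℝ) - 1) / (2 * Etot ^ 2) := by
    subst hQ1 hQ2 hQA
    field_simp
    ring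
  refine ⟨hdiff, ?_, ?_⟩
  · rw [← sub_pos, hdiff]
    rw [div_pos_iff]
    constructor
    · rintro (⟨h1, _⟩ | ⟨_, h2⟩)
      · nlinarith
      · nlinarith
    · intro h
      left
      constructor <;> nlinarith
  · rw [← sub_pos, hdiff, div_pos_iff]
    constructor
    · rintro (⟨h1, _⟩ | ⟨_, h2⟩)
      · nlinarith
      · nlinarith
    · intro h
      left
      constructor <;> nlinarith
end

section
/- Let G₀ be a p-star (a center node adjacent to p leaves, no other edges) contained as a component in a network with E total edges. Among clusterings of G₀ into one cluster containing the center and x singleton leaf clusters (0 ≤ x ≤ p), the total modularity Q = [4px − 4Ex − x² − x − 4p² + 4Ep]/(4E²) is maximized at x = 0: the whole star as a single cluster is modularity-optimal among such clusterings (using E ≥ p). -/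
/-- let `G₀` be a `p`-star (center plus `p` leaves) in a network with
`E ≥ p` total edges (`p ≥ 1`).  For `0 ≤ x ≤ p` leaves split off as singleton clusters, the
total modularity of the induced clustering of `G₀` is
`Q(x) = (p-x)/E - ((2p-x)/(2E))² - x·(1/(2E))²
      = (4px - 4Ex - x² - x - 4p² + 4Ep)/(4E²)`,
and it is maximized at `x = 0`: the whole star as a single cluster is optimal. -/
theorem stmt_17 (p : ℕ) (hp : 1 ≤ p) (E : ℝ) (hE : (p : ℝ) ≤ E)
    (Q : ℕ → ℝ)
    (hQ : ∀ x : ℕ, x ≤ p → Q x =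
      ((p : ℝ) - x) / E - ((2 * (p : ℝ) - x) / (2 * E)) ^ 2
        - (x : ℝ) * (1 / (2 * E)) ^ 2) :
    (∀ x : ℕ, x ≤ p → Q x =
      (4 * (p : ℝ) * x - 4 * E * x - (x : ℝ) ^ 2 - x - 4 * (p : ℝ) ^ 2 + 4 * E * p)
        / (4 * E ^ 2)) ∧
    (∀ x : ℕ, x ≤ p → Q x ≤ Q 0) := by
  have hpR : (1 : ℝ) ≤ (p : ℝ) := by exact_mod_cast hp
  have hE0 : (0 : ℝ) < E := lt_of_lt_of_le (by linarith) hE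
  have hne : E ≠ 0 := ne_of_gt hE0
  have key : ∀ x : ℕ, x ≤ p → Q x =
      (4 * (p : ℝ) * x - 4 * E * x - (x : ℝ) ^ 2 - x - 4 * (p : ℝ) ^ 2 + 4 * E * p)
        / (4 * E ^ 2) := by
    intro x hx
    rw [hQ x hx]
    field_simp
    ring
  refine ⟨key, fun x hx => ?_⟩
  rw [key x hx, key 0 (Nat.zero_le p)]
  have hxR : (0 : ℝ) ≤ (x : ℝ) := Nat.cast_nonneg x
  have h1 : 4 * (p : ℝ) * x ≤ 4 * E * x := by nlinarith
  have hE2 : (0 : ℝ) < 4 * E ^ 2 := by positivity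
  apply div_le_div_of_nonneg_right ?_ hE2.le
  push_cast; nlinarith
end

section
/- IKC fails the Fixed Point axiom: if C is a k-clique that IKC returns as a cluster of a network N (so C has positive modularity in N), then applying IKC to the subnetwork C alone returns no non-singleton cluster, because the modularity of the full vertex set of any connected network is exactly 0, failing IKC's positive-modularity requirement. More precisely: for any connected graph G with edge set E(G), the modularity of the single cluster containing all of V(G) equals |E|/|E| − (2|E|/(2|E|))² = 0. -/
open Finset

/-- The modularity of a cluster with `ec` internal edges and degree sum `dc`, in a network
with `Ecard` edges. -/
noncomputable def modCluster (Ecard ec dc : ℕ) : ℝ :=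
  (ec : ℝ) / Ecard - ((dc : ℝ) / (2 * Ecard)) ^ 2

/-- IKC fails the Fixed Point axiom.  If a returned `k`-clique (or any
connected network) `G` is viewed as a standalone network, the modularity of the single
cluster consisting of all of `V(G)` is `|E|/|E| - (2|E|/(2|E|))² = 0`, since then
`e_c = |E|` and `d_c = Σ_v deg v = 2|E|`; in particular it is not strictly positive, so
IKC's positive-modularity requirement fails and IKC returns no non-singleton cluster. -/
theorem stmt_19 {V : Type*} [Fintype V] (G : SimpleGraph V) [DecidableRel G.Adj]
    (hE : G.edgeFinset.Nonempty) :
    (∑ v : V, G.degree v) = 2 * G.edgeFinset.card ∧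
    modCluster G.edgeFinset.card G.edgeFinset.card (∑ v : V, G.degree v) = 0 ∧
    ¬ 0 < modCluster G.edgeFinset.card G.edgeFinset.card (∑ v : V, G.degree v) := by
  have hsum := SimpleGraph.sum_degrees_eq_twice_card_edges G
  have hc : (G.edgeFinset.card : ℝ) ≠ 0 := by
    exact_mod_cast Finset.card_ne_zero_of_mem hE.choose_spec
  have hmod : modCluster G.edgeFinset.card G.edgeFinset.card (∑ v : V, G.degree v) = 0 := by
    rw [hsum]; unfold modCluster; push_cast; rw [div_self hc, div_self (by positivity), one_pow, sub_self]
  exact ⟨hsum, hmod, by rw [hmod]; exact lt_irrefl 0⟩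
end
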